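/- Fix a cost vector $\omega$ with tie-breaking term order $\succ$. The reduced Gröbner basis $\mathcal{G}_{A,\succ}$ of $I_A$, viewed as the set of vectors $\{u - v : x^u - x^v \in \mathcal{G}_{A,\succ}, x^u \text{ the leading term}\} \subset \ker_{\mathbb{Z}}(A)$, is a test set for the family of integer programs $IP_{A,\omega}$: (a) for every non-optimal feasible solution $v$ of any program $IP_{A,\omega}(b)$ there exists $w$ in the set with $v - w$ feasible and $x^v \succ x^{v-w}$, and (b) for the optimal solution $u$ of $IP_{A,\omega}(b)$ and every $w$ in the set, $u - w$ is infeasible. -/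

import Mathlib

open MvPolynomial

noncomputable section

universe u

variable {α β : Type*} [Fintype α] [Fintype β]

/-- The Laurent monomial `t^a` in the group algebra `ℂ[ℤ^α]` (the Laurent polynomial ring). -/
def laurentMonomial (a : α → ℤ) : AddMonoidAlgebra ℂ (α →₀ ℤ) :=
  AddMonoidAlgebra.single (Finsupp.equivFunOnFinite.symm a) 1

/-- The monomial map `φ_A : x_j ↦ t^{a_j}` where `a_j` is the `j`-th column of `A`. -/
def phiMap (A : Matrix α β ℤ) : MvPolynomial β ℂ →ₐ[ℂ] AddMonoidAlgebra ℂ (α →₀ ℤ) :=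
  MvPolynomial.aeval fun j => laurentMonomial fun i => A i j

/-- The toric ideal `I_A`, the kernel of `φ_A`. -/
def toricIdeal (A : Matrix α β ℤ) : Ideal (MvPolynomial β ℂ) :=
  RingHom.ker (phiMap A).toRingHom

/-- The leading monomial (exponent vector) of `f` with respect to a monomial order. -/
def leadMon (m : MonomialOrder β) (f : MvPolynomial β ℂ) : β →₀ ℕ :=
  m.toSyn.symm (f.support.sup m.toSyn)

/-- The leading coefficient of `f` with respect to a monomial order. -/
def leadCoeff (m : MonomialOrder β) (f : MvPolynomial β ℂ) : ℂ := f.coeff (leadMon m f)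

/-- `G` is a Gröbner basis of `I`: a finite set of nonzero elements of `I` whose leading
monomials generate the initial ideal of `I` (i.e. the leading monomial of every nonzero
element of `I` is divisible by the leading monomial of some element of `G`). -/
def IsGroebnerBasis (m : MonomialOrder β) (I : Ideal (MvPolynomial β ℂ))
    (G : Set (MvPolynomial β ℂ)) : Prop :=
  G.Finite ∧ (∀ g ∈ G, g ∈ I ∧ g ≠ 0) ∧
    ∀ f ∈ I, f ≠ 0 → ∃ g ∈ G, leadMon m g ≤ leadMon m f

/-- `G` is the reduced Gröbner basis of `I`: a Gröbner basis, all of whose elements are monic,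
such that no monomial occurring in an element of `G` is divisible by the leading monomial of
another element of `G`. -/
def IsReducedGroebnerBasis (m : MonomialOrder β) (I : Ideal (MvPolynomial β ℂ))
    (G : Set (MvPolynomial β ℂ)) : Prop :=
  IsGroebnerBasis m I G ∧ (∀ g ∈ G, leadCoeff m g = 1) ∧
    ∀ g ∈ G, ∀ g' ∈ G, g' ≠ g → ∀ c ∈ g.support, ¬ leadMon m g' ≤ c

/-- The positive part `w⁺` of an integer vector, as an exponent vector. -/
def posPart (w : β → ℤ) : β →₀ ℕ := Finsupp.equivFunOnFinite.symm fun i => (w i).toNat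

/-- The negative part `w⁻` of an integer vector, as an exponent vector. -/
def negPart (w : β → ℤ) : β →₀ ℕ := Finsupp.equivFunOnFinite.symm fun i => (-(w i)).toNat

/-- The binomial `x^{w⁺} - x^{w⁻}` associated to an integer vector `w`. -/
def binom (w : β → ℤ) : MvPolynomial β ℂ := monomial (posPart w) 1 - monomial (negPart w) 1

/-- A circuit of `A`: a nonzero integer vector in `ker A` with coprime entries whose support
is minimal with respect to inclusion among supports of nonzero elements of `ker A`. -/
def IsCircuit (A : Matrix α β ℤ) (u : β → ℤ) : Prop :=
  u ≠ 0 ∧ A.mulVec u = 0 ∧ Finset.gcd Finset.univ u = 1 ∧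
    ∀ v : β → ℤ, v ≠ 0 → A.mulVec v = 0 →
      {i | v i ≠ 0} ⊆ {i | u i ≠ 0} → {i | v i ≠ 0} = {i | u i ≠ 0}

/-- A sign pattern `ρ ∈ {+1,-1}^n`. -/
def IsSignPattern (ρ : β → ℤ) : Prop := ∀ i, ρ i = 1 ∨ ρ i = -1

/-- Membership in `H_ρ = ℝ^n_ρ ∩ ker_ℤ(A)`: integer kernel elements conforming to the sign
pattern `ρ`. -/
def MemH (A : Matrix α β ℤ) (ρ : β → ℤ) (w : β → ℤ) : Prop :=
  A.mulVec w = 0 ∧ ∀ i, 0 ≤ ρ i * w i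

/-- `w` belongs to the Hilbert basis of the pointed cone `H_ρ`: it is a nonzero element of
`H_ρ` which cannot be written as the sum of two nonzero elements of `H_ρ` (equivalently, it
belongs to the unique minimal generating set of the monoid `H_ρ`). -/
def IsHilbertBasisElem (A : Matrix α β ℤ) (ρ : β → ℤ) (w : β → ℤ) : Prop :=
  MemH A ρ w ∧ w ≠ 0 ∧
    ¬ ∃ a b : β → ℤ, MemH A ρ a ∧ MemH A ρ b ∧ a ≠ 0 ∧ b ≠ 0 ∧ w = a + b

/-- `w` is a Graver basis vector of `A`: a member of the Hilbert basis of `H_ρ` for some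
sign pattern `ρ`. -/
def IsGraverVector (A : Matrix α β ℤ) (w : β → ℤ) : Prop :=
  ∃ ρ : β → ℤ, IsSignPattern ρ ∧ IsHilbertBasisElem A ρ w

/-- The Graver basis `Gr_A` of the toric ideal `I_A`, as a set of binomials. -/
def graverBasis (A : Matrix α β ℤ) : Set (MvPolynomial β ℂ) :=
  { p | ∃ w : β → ℤ, IsGraverVector A w ∧ p = binom w }

/-- The degree of the binomial `x^{w⁺} - x^{w⁻}`, namely `max(Σ w⁺, Σ w⁻)`. -/
def degZ (w : β → ℤ) : ℕ := max (∑ i, (w i).toNat) (∑ i, (-(w i)).toNat)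

/-- The columns of `A` generate a pointed cone. -/
def PointedCone' (A : Matrix α β ℤ) : Prop :=
  ∀ c : β → ℚ, (∀ i, 0 ≤ c i) → (A.map (Int.cast : ℤ → ℚ)).mulVec c = 0 → c = 0

/-- The row span of `A` contains the all-ones vector. -/
def RowSpanOne (A : Matrix α β ℤ) : Prop :=
  ∃ w : α → ℚ, (A.map (Int.cast : ℤ → ℚ)).vecMul w = fun _ => 1

/-- The universal Gröbner basis of an ideal: the union of its reduced Gröbner bases over
all term orders. -/
def universalGroebnerBasis {γ : Type u} [Fintype γ] (I : Ideal (MvPolynomial γ ℂ)) :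
    Set (MvPolynomial γ ℂ) :=
  { p | ∃ (m : MonomialOrder.{u, u} γ) (G : Set (MvPolynomial γ ℂ)),
      IsReducedGroebnerBasis m I G ∧ p ∈ G }

/-- The initial ideal of `I` with respect to a monomial order: the monomial ideal generated by
the leading monomials of the nonzero elements of `I`. -/
def initialIdeal (m : MonomialOrder β) (I : Ideal (MvPolynomial β ℂ)) :
    Ideal (MvPolynomial β ℂ) :=
  Ideal.span { p | ∃ f ∈ I, f ≠ 0 ∧ p = monomial (leadMon m f) (1 : ℂ) }

/-- `x` is a feasible solution of `IP_{A,ω}(b)`: a nonnegative integer vector with `Ax = b`. -/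
def Feasible {α β : Type*} [Fintype α] [Fintype β] (A : Matrix α β ℤ) (b : α → ℤ)
    (x : β → ℕ) : Prop :=
  A.mulVec (fun i => (x i : ℤ)) = b

/-- The cost `ω · x` of a solution. -/
def ipCost {β : Type*} [Fintype β] (ω : β → ℝ) (x : β → ℕ) : ℝ := ∑ i, ω i * x i

/-- `x` is an optimal solution of `IP_{A,ω}(b)`. -/
def IsOptimalSol {α β : Type*} [Fintype α] [Fintype β] (A : Matrix α β ℤ) (ω : β → ℝ)
    (b : α → ℤ) (x : β → ℕ) : Prop :=
  Feasible A b x ∧ ∀ y : β → ℕ, Feasible A b y → ipCost ω x ≤ ipCost ω y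

/-- Feasibility of an integer vector for `IP_{A,ω}(b)`: `Ay = b` and `y ≥ 0`. -/
def FeasibleZ {α β : Type*} [Fintype α] [Fintype β] (A : Matrix α β ℤ) (b : α → ℤ)
    (y : β → ℤ) : Prop :=
  A.mulVec y = b ∧ ∀ i, 0 ≤ y i

/-- The reduced Gröbner basis `𝒢_{A,≻}` viewed as a set of vectors
`{u - v : x^u - x^v ∈ 𝒢, x^u the leading term}` in `ker_ℤ(A)`. -/
def gbVectors {β : Type*} [Fintype β] (m : MonomialOrder β) (G : Set (MvPolynomial β ℂ)) :
    Set (β → ℤ) :=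
  { w | binom w ∈ G ∧ m.toSyn (negPart w) < m.toSyn (posPart w) }

/-!
The monomial map `φ_A` is induced by the monoid map `u ↦ A u`, so an element of `I_A` has
coefficients summing to zero over every fibre of `u ↦ A u`. Hence the leading monomial `x^u` of a
monic `g ∈ I_A` is accompanied by some `x^c` with `A c = A u`, and reducedness forces
`g = x^u - x^c`, with `u` and `c` of disjoint supports: for `e = u ⊓ c ≠ 0` the leading monomial
of `x^{u-e} - x^{c-e} ∈ I_A` divides a term of `g`, so by reducedness it would have to be divisible
by `x^u`, whereas it is `x^{u-e}` or `x^{c-e} ≺ x^u`.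

(a) If `y` is feasible and cheaper than `v`, then `x^v - x^y ∈ I_A` has leading monomial `x^v`,
which is divisible by the leading monomial `x^u` of some `x^u - x^c` in the basis; then
`v - (u - c)` is feasible and smaller than `v` in the term order.
(b) Subtracting `w` from a feasible point lowers it in the term order, hence (as the order refines
the cost) does not raise its cost; so if `x - w` were feasible it would be a second optimum.
-/

section Binomial

variable {σ R : Type*} [CommRing R]

lemma mem_support_monomial_sub_monomial {u v c : σ →₀ ℕ}
    (hc : c ∈ (monomial u (1 : R) - monomial v 1).support) : c = u ∨ c = v := by
  classical
  rcases Finset.mem_union.1 (support_sub σ _ _ hc) with h | h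
  · exact .inl (Finset.mem_singleton.1 (support_monomial_subset h))
  · exact .inr (Finset.mem_singleton.1 (support_monomial_subset h))

variable [Nontrivial R]

lemma monomial_sub_monomial_ne_zero {u v : σ →₀ ℕ} (h : u ≠ v) :
    monomial u (1 : R) - monomial v 1 ≠ 0 :=
  sub_ne_zero.2 fun h' => h (monomial_left_injective one_ne_zero h')

lemma left_mem_support_monomial_sub_monomial {u v : σ →₀ ℕ} (h : u ≠ v) :
    u ∈ (monomial u (1 : R) - monomial v 1).support := by
  classical
  simp [mem_support_iff, coeff_monomial, h.symm]

lemma right_mem_support_monomial_sub_monomial {u v : σ →₀ ℕ} (h : u ≠ v) :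
    v ∈ (monomial u (1 : R) - monomial v 1).support := by
  classical
  simp [mem_support_iff, coeff_monomial, h]

lemma MonomialOrder.degree_monomial_sub_monomial (m : MonomialOrder σ) {u v : σ →₀ ℕ}
    (h : m.toSyn v < m.toSyn u) : m.degree (monomial u (1 : R) - monomial v 1) = u := by
  classical
  rw [m.degree_sub_of_lt] <;> simp [m.degree_monomial, h]

end Binomial

def aDegree (A : Matrix α β ℤ) : (β →₀ ℕ) →+ (α →₀ ℤ) where
  toFun u := Finsupp.equivFunOnFinite.symm (A.mulVec fun j => (u j : ℤ))
  map_zero' := by ext; simp [Matrix.mulVec, dotProduct]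
  map_add' u v := by ext; simp [Matrix.mulVec, dotProduct, mul_add, Finset.sum_add_distrib]

lemma aDegree_single (A : Matrix α β ℤ) (j : β) :
    aDegree A (Finsupp.single j 1) = Finsupp.equivFunOnFinite.symm fun i => A i j := by
  classical
  ext i
  simp [aDegree, Matrix.mulVec, dotProduct, Finsupp.single_apply, apply_ite]

lemma phiMap_eq_mapDomainAlgHom (A : Matrix α β ℤ) :
    phiMap A = AddMonoidAlgebra.mapDomainAlgHom ℂ ℂ (aDegree A) := by
  refine MvPolynomial.algHom_ext fun j => ?_
  rw [phiMap, aeval_X, AddMonoidAlgebra.mapDomainAlgHom_apply]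
  show _ = AddMonoidAlgebra.mapDomain _ (AddMonoidAlgebra.single _ _)
  rw [AddMonoidAlgebra.mapDomain_single, aDegree_single, laurentMonomial]

lemma sum_coeff_fiber_eq_zero {A : Matrix α β ℤ} {g : MvPolynomial β ℂ}
    (hg : g ∈ toricIdeal A) (u : β →₀ ℕ) :
    ∑ c ∈ g.support with aDegree A c = aDegree A u, g.coeff c = 0 := by
  have hφ : phiMap A g = 0 := hg
  rw [phiMap_eq_mapDomainAlgHom] at hφ
  have := congrArg (AddMonoidAlgebra.coeff · (aDegree A u)) hφ
  simp only [AddMonoidAlgebra.mapDomainAlgHom_apply, AddMonoidAlgebra.coeff_mapDomain,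
    Finsupp.mapDomain_apply_eq_sum, AddMonoidAlgebra.coeff_zero, Finsupp.coe_zero,
    Pi.zero_apply] at this
  exact this

lemma monomial_sub_monomial_mem_toricIdeal {A : Matrix α β ℤ} {u v : β →₀ ℕ}
    (h : aDegree A u = aDegree A v) : monomial u (1 : ℂ) - monomial v 1 ∈ toricIdeal A := by
  show phiMap A _ = 0
  rw [phiMap_eq_mapDomainAlgHom, map_sub, sub_eq_zero]
  show AddMonoidAlgebra.mapDomain _ (AddMonoidAlgebra.single _ _) =
    AddMonoidAlgebra.mapDomain _ (AddMonoidAlgebra.single _ _)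
  rw [AddMonoidAlgebra.mapDomain_single, AddMonoidAlgebra.mapDomain_single, h]

lemma exists_ne_mem_support_aDegree_eq {A : Matrix α β ℤ} {g : MvPolynomial β ℂ}
    (hg : g ∈ toricIdeal A) {u : β →₀ ℕ} (hu : u ∈ g.support) :
    ∃ c ∈ g.support, c ≠ u ∧ aDegree A c = aDegree A u := by
  by_contra! h
  have hsum := sum_coeff_fiber_eq_zero hg u
  rw [Finset.sum_eq_single_of_mem u ?_ ?_] at hsum
  · exact mem_support_iff.1 hu hsum
  · exact Finset.mem_filter.2 ⟨hu, rfl⟩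
  · intro c hc hcu
    exact (h c (Finset.mem_filter.1 hc).1 hcu (Finset.mem_filter.1 hc).2).elim

lemma Feasible.aDegree_eq {A : Matrix α β ℤ} {b : α → ℤ} {v : β → ℕ} (hv : Feasible A b v) :
    aDegree A (Finsupp.equivFunOnFinite.symm v) = Finsupp.equivFunOnFinite.symm b := by
  rw [← hv]
  rfl

lemma mulVec_natCast_sub_eq_zero {A : Matrix α β ℤ} {u c : β →₀ ℕ}
    (h : aDegree A c = aDegree A u) : A.mulVec (fun i => (u i : ℤ) - c i) = 0 := by
  have h' : A.mulVec (fun j => (c j : ℤ)) = A.mulVec (fun j => (u j : ℤ)) :=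
    Finsupp.equivFunOnFinite.symm.injective h
  rw [show (fun i => (u i : ℤ) - c i) = (fun i => (u i : ℤ)) - fun i => (c i : ℤ) from rfl,
    Matrix.mulVec_sub, h', sub_self]

lemma posPart_natCast_sub {u c : β →₀ ℕ} (h : u ⊓ c = 0) :
    _root_.posPart (fun i => (u i : ℤ) - c i) = u := by
  ext i
  have := DFunLike.congr_fun h i
  simp only [Finsupp.inf_apply, Finsupp.coe_zero, Pi.zero_apply] at this
  simp only [_root_.posPart, Finsupp.coe_equivFunOnFinite_symm]
  omega

lemma negPart_natCast_sub {u c : β →₀ ℕ} (h : u ⊓ c = 0) :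
    _root_.negPart (fun i => (u i : ℤ) - c i) = c := by
  ext i
  have := DFunLike.congr_fun h i
  simp only [Finsupp.inf_apply, Finsupp.coe_zero, Pi.zero_apply] at this
  simp only [_root_.negPart, Finsupp.coe_equivFunOnFinite_symm]
  omega

lemma toSyn_toNat_sub_lt (m : MonomialOrder β) {w : β → ℤ}
    (hw : m.toSyn (_root_.negPart w) < m.toSyn (_root_.posPart w)) {v : β → ℕ}
    (hv : ∀ i, 0 ≤ (v i : ℤ) - w i) :
    m.toSyn (Finsupp.equivFunOnFinite.symm fun i => ((v i : ℤ) - w i).toNat) <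
      m.toSyn (Finsupp.equivFunOnFinite.symm v) := by
  set y := Finsupp.equivFunOnFinite.symm fun i => ((v i : ℤ) - w i).toNat
  set V := Finsupp.equivFunOnFinite.symm v
  have hsum : y + _root_.posPart w = V + _root_.negPart w := by
    ext i
    have := hv i
    simp only [y, V, _root_.posPart, _root_.negPart, Finsupp.coe_add, Pi.add_apply,
      Finsupp.coe_equivFunOnFinite_symm]
    omega
  have : m.toSyn y + m.toSyn (_root_.posPart w) < m.toSyn V + m.toSyn (_root_.posPart w) := by
    rw [← map_add, hsum, map_add]
    gcongr
  exact lt_of_add_lt_add_right this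

namespace IsReducedGroebnerBasis

variable {m : MonomialOrder β} {I : Ideal (MvPolynomial β ℂ)} {G : Set (MvPolynomial β ℂ)}

lemma degree_le_of_le_mem_support (hG : IsReducedGroebnerBasis m I G)
    {g f : MvPolynomial β ℂ} (hg : g ∈ G) (hf : f ∈ I) (hf0 : f ≠ 0) {c : β →₀ ℕ}
    (hc : c ∈ g.support) (hfc : m.degree f ≤ c) : m.degree g ≤ m.degree f := by
  obtain ⟨g', hg', hle⟩ := hG.1.2.2 f hf hf0
  obtain rfl : g' = g := by
    by_contra hne
    exact hG.2.2 g hg g' hg' hne c hc (hle.trans hfc)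
  exact hle

variable {A : Matrix α β ℤ}

theorem exists_eq_monomial_sub_monomial (hG : IsReducedGroebnerBasis m (toricIdeal A) G)
    {g : MvPolynomial β ℂ} (hg : g ∈ G) :
    ∃ c, m.toSyn c < m.toSyn (m.degree g) ∧ aDegree A c = aDegree A (m.degree g) ∧
      g = monomial (m.degree g) 1 - monomial c 1 := by
  classical
  obtain ⟨hgI, hg0⟩ := hG.1.2.1 g hg
  set u := m.degree g
  have hu : u ∈ g.support := m.degree_mem_support hg0
  obtain ⟨c, hc, hcu, hdeg⟩ := exists_ne_mem_support_aDegree_eq hgI hu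
  have hlt : m.toSyn c < m.toSyn u :=
    (m.le_degree hc).lt_of_ne fun h => hcu (m.toSyn.injective h)
  refine ⟨c, hlt, hdeg, ?_⟩
  by_contra hne
  set f := g - (monomial u (1 : ℂ) - monomial c 1)
  have hf0 : f ≠ 0 := sub_ne_zero.2 hne
  have hfI : f ∈ toricIdeal A :=
    sub_mem hgI (monomial_sub_monomial_mem_toricIdeal hdeg.symm)
  have hfu : f.coeff u = 0 := by
    simp [f, coeff_monomial, hcu, show g.coeff u = 1 from hG.2.1 g hg]
  have hdeg_f : m.degree f ∈ g.support := by
    rcases Finset.mem_union.1 (support_sub β g _ (m.degree_mem_support hf0)) with h | h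
    · exact h
    · rcases mem_support_monomial_sub_monomial h with h | h <;> rw [h]
      exacts [hu, hc]
  have hle := hG.degree_le_of_le_mem_support hg hfI hf0 hdeg_f le_rfl
  have : m.degree f = u :=
    m.toSyn.injective ((m.le_degree hdeg_f).antisymm (m.toSyn_monotone hle))
  exact mem_support_iff.1 (m.degree_mem_support hf0) (by rw [this]; exact hfu)

theorem inf_eq_zero_of_monomial_sub_monomial_mem
    (hG : IsReducedGroebnerBasis m (toricIdeal A) G) {u c : β →₀ ℕ}
    (hlt : m.toSyn c < m.toSyn u) (hdeg : aDegree A c = aDegree A u)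
    (hg : monomial u (1 : ℂ) - monomial c 1 ∈ G) : u ⊓ c = 0 := by
  have hcu : c ≠ u := fun h => hlt.ne (congrArg m.toSyn h)
  set e := u ⊓ c
  have heu : u - e + e = u := tsub_add_cancel_of_le inf_le_left
  have hec : c - e + e = c := tsub_add_cancel_of_le inf_le_right
  have hne : u - e ≠ c - e := fun h => hcu (by rw [← hec, ← h, heu])
  set f := monomial (u - e) (1 : ℂ) - monomial (c - e) 1
  have hf0 : f ≠ 0 := monomial_sub_monomial_ne_zero hne
  have hfI : f ∈ toricIdeal A := by
    refine monomial_sub_monomial_mem_toricIdeal (add_right_cancel (b := aDegree A e) ?_)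
    rw [← map_add, ← map_add, heu, hec, hdeg]
  have hle : ∀ d ∈ (monomial u (1 : ℂ) - monomial c 1).support, m.degree f ≤ d →
      u ≤ m.degree f := fun d hd hfd => by
    simpa only [m.degree_monomial_sub_monomial hlt] using
      hG.degree_le_of_le_mem_support hg hfI hf0 hd hfd
  rcases mem_support_monomial_sub_monomial (m.degree_mem_support hf0) with h | h
  · have hue : u ≤ u - e :=
      h ▸ hle u (left_mem_support_monomial_sub_monomial hcu.symm) (h ▸ tsub_le_self)
    exact nonpos_iff_eq_zero.1 <|
      (add_le_iff_nonpos_right u).1 <| (le_tsub_iff_right inf_le_left).1 hue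
  · have huc : u ≤ c :=
      (h ▸ hle c (right_mem_support_monomial_sub_monomial hcu.symm) (h ▸ tsub_le_self)).trans
        tsub_le_self
    exact absurd hlt (not_lt.2 (m.toSyn_monotone huc))

theorem exists_mem_gbVectors
    (hG : IsReducedGroebnerBasis m (toricIdeal A) G) {g : MvPolynomial β ℂ} (hg : g ∈ G) :
    ∃ w ∈ gbVectors m G, A.mulVec w = 0 ∧ _root_.posPart w = m.degree g := by
  obtain ⟨c, hlt, hdeg, hgc⟩ := hG.exists_eq_monomial_sub_monomial hg
  have hinf := hG.inf_eq_zero_of_monomial_sub_monomial_mem hlt hdeg (hgc ▸ hg)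
  refine ⟨fun i => (m.degree g i : ℤ) - c i, ⟨?_, ?_⟩, mulVec_natCast_sub_eq_zero hdeg,
    posPart_natCast_sub hinf⟩
  · rwa [binom, posPart_natCast_sub hinf, negPart_natCast_sub hinf, ← hgc]
  · rwa [posPart_natCast_sub hinf, negPart_natCast_sub hinf]

theorem exists_improving_mem_gbVectors
    (hG : IsReducedGroebnerBasis m (toricIdeal A) G) {b : α → ℤ} {v y : β → ℕ}
    (hv : Feasible A b v) (hy : Feasible A b y)
    (hyv : m.toSyn (Finsupp.equivFunOnFinite.symm y) <
      m.toSyn (Finsupp.equivFunOnFinite.symm v)) :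
    ∃ w ∈ gbVectors m G, FeasibleZ A b (fun i => (v i : ℤ) - w i) ∧
      m.toSyn (Finsupp.equivFunOnFinite.symm fun i => ((v i : ℤ) - w i).toNat) <
        m.toSyn (Finsupp.equivFunOnFinite.symm v) := by
  have hvy : Finsupp.equivFunOnFinite.symm v ≠ Finsupp.equivFunOnFinite.symm y :=
    fun h => hyv.ne' (congrArg m.toSyn h)
  obtain ⟨g, hg, hgv⟩ := hG.1.2.2 _
    (monomial_sub_monomial_mem_toricIdeal (hv.aDegree_eq.trans hy.aDegree_eq.symm))
    (monomial_sub_monomial_ne_zero hvy)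
  obtain ⟨w, hw, hAw, hpos⟩ := hG.exists_mem_gbVectors hg
  have hwv' : _root_.posPart w ≤ Finsupp.equivFunOnFinite.symm v :=
    calc _ = m.degree g := hpos
      _ ≤ _ := hgv
      _ = _ := m.degree_monomial_sub_monomial hyv
  have hwv : ∀ i, 0 ≤ (v i : ℤ) - w i := by
    intro i
    have := hwv' i
    simp only [_root_.posPart, Finsupp.coe_equivFunOnFinite_symm] at this
    omega
  refine ⟨w, hw, ⟨?_, hwv⟩, toSyn_toNat_sub_lt m hw.2 hwv⟩
  rw [show (fun i => (v i : ℤ) - w i) = (fun i => (v i : ℤ)) - w from rfl, Matrix.mulVec_sub,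
    hAw, sub_zero, hv]

end IsReducedGroebnerBasis

theorem IsOptimalSol.not_feasibleZ_sub {m : MonomialOrder β} {ω : β → ℝ} {A : Matrix α β ℤ}
    (hcomp : ∀ u v : β →₀ ℕ,
      (∑ i, ω i * (u i : ℝ)) < (∑ i, ω i * (v i : ℝ)) → m.toSyn u < m.toSyn v)
    (huniq : ∀ (b : α → ℤ) (x y : β → ℕ),
      IsOptimalSol A ω b x → IsOptimalSol A ω b y → x = y)
    {b : α → ℤ} {x : β → ℕ} (hx : IsOptimalSol A ω b x) {w : β → ℤ}
    (hw : m.toSyn (_root_.negPart w) < m.toSyn (_root_.posPart w)) :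
    ¬ FeasibleZ A b (fun i => (x i : ℤ) - w i) := by
  rintro ⟨hAy, hy0⟩
  set y : β → ℕ := fun i => ((x i : ℤ) - w i).toNat
  have hy : Feasible A b y := by
    rw [Feasible, ← hAy]
    exact congrArg _ (funext fun i => Int.toNat_of_nonneg (hy0 i))
  have hyx := toSyn_toNat_sub_lt m hw hy0
  have hcost : ipCost ω y ≤ ipCost ω x := not_lt.1 fun h =>
    (hcomp (Finsupp.equivFunOnFinite.symm x) (Finsupp.equivFunOnFinite.symm y) h).asymm hyx
  have hxy : x = y := huniq b x y hx ⟨hy, fun z hz => hcost.trans (hx.2 z hz)⟩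
  exact hyx.ne (congrArg (m.toSyn ∘ Finsupp.equivFunOnFinite.symm) hxy.symm)

theorem reducedGB_is_test_set_general (d n : ℕ) (A : Matrix (Fin d) (Fin n) ℤ)
    (ω : Fin n → ℝ) (m : MonomialOrder (Fin n))
    (hcomp : ∀ u v : Fin n →₀ ℕ,
      (∑ i, ω i * (u i : ℝ)) < (∑ i, ω i * (v i : ℝ)) → m.toSyn u < m.toSyn v)
    (huniq : ∀ (b : Fin d → ℤ) (x y : Fin n → ℕ),
      IsOptimalSol A ω b x → IsOptimalSol A ω b y → x = y)
    (G : Set (MvPolynomial (Fin n) ℂ))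
    (hG : IsReducedGroebnerBasis m (toricIdeal A) G) :
    -- (a)
    (∀ (b : Fin d → ℤ) (v : Fin n → ℕ), Feasible A b v → ¬ IsOptimalSol A ω b v →
      ∃ w ∈ gbVectors m G, FeasibleZ A b (fun i => (v i : ℤ) - w i) ∧
        m.toSyn (Finsupp.equivFunOnFinite.symm fun i => ((v i : ℤ) - w i).toNat) <
          m.toSyn (Finsupp.equivFunOnFinite.symm fun i => v i)) ∧
    -- (b)
    (∀ (b : Fin d → ℤ) (x : Fin n → ℕ), IsOptimalSol A ω b x →
      ∀ w ∈ gbVectors m G, ¬ FeasibleZ A b (fun i => (x i : ℤ) - w i)) := by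
  refine ⟨fun b v hv hnopt => ?_, fun b x hx w hw => hx.not_feasibleZ_sub hcomp huniq hw.2⟩
  obtain ⟨y, hy, hyv⟩ : ∃ y, Feasible A b y ∧ ipCost ω y < ipCost ω v := by
    by_contra! h
    exact hnopt ⟨hv, h⟩
  exact hG.exists_improving_mem_gbVectors hv hy
    (hcomp (Finsupp.equivFunOnFinite.symm y) (Finsupp.equivFunOnFinite.symm v) hyv)

/-- The reduced Gröbner basis `𝒢_{A,≻}`, viewed as a set of vectors in
`ker_ℤ(A)`, is a test set for the family of integer programs `IP_{A,ω}`: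
(a) for every non-optimal feasible solution `v` of any program `IP_{A,ω}(b)` there is a `w`
in the set with `v - w` feasible and `x^v ≻ x^{v-w}`, and
(b) for the optimal solution `u` of `IP_{A,ω}(b)` and every `w` in the set, `u - w` is
infeasible. -/
theorem reducedGB_is_test_set (d n : ℕ) (A : Matrix (Fin d) (Fin n) ℤ)
    (hrank : A.rank = d) (hpointed : PointedCone' A) (hrow : RowSpanOne A)
    (ω : Fin n → ℝ) (m : MonomialOrder (Fin n))
    (hcomp : ∀ u v : Fin n →₀ ℕ,
      (∑ i, ω i * (u i : ℝ)) < (∑ i, ω i * (v i : ℝ)) → m.toSyn u < m.toSyn v)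
    (huniq : ∀ (b : Fin d → ℤ) (x y : Fin n → ℕ),
      IsOptimalSol A ω b x → IsOptimalSol A ω b y → x = y)
    (G : Set (MvPolynomial (Fin n) ℂ))
    (hG : IsReducedGroebnerBasis m (toricIdeal A) G) :
    -- (a)
    (∀ (b : Fin d → ℤ) (v : Fin n → ℕ), Feasible A b v → ¬ IsOptimalSol A ω b v →
      ∃ w ∈ gbVectors m G, FeasibleZ A b (fun i => (v i : ℤ) - w i) ∧
        m.toSyn (Finsupp.equivFunOnFinite.symm fun i => ((v i : ℤ) - w i).toNat) <
          m.toSyn (Finsupp.equivFunOnFinite.symm fun i => v i)) ∧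
    -- (b)
    (∀ (b : Fin d → ℤ) (x : Fin n → ℕ), IsOptimalSol A ω b x →
      ∀ w ∈ gbVectors m G, ¬ FeasibleZ A b (fun i => (x i : ℤ) - w i)) :=
  reducedGB_is_test_set_general d n A ω m hcomp huniq G hG
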